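/- Fix an integer K ≥ 1. Let x = (x_1,…,x_K) ∈ [0,1]^K, let k ∈ {1,…,K}, let x'_k ∈ [0,1], and let x' be the vector obtained from x by replacing its k-th coordinate with x'_k. Then the biased sample variances satisfy |σ̂²(x) − σ̂²(x')| ≤ (K−1)/K², and in particular |σ̂²(x) − σ̂²(x')| ≤ 1/K. -/

import Mathlib

/-!
Write `σ̂²(x) = (1 / 2K²) Σ_{i,j} (x_i - x_j)²`. Changing `x_k` to `x'_k` only affects the pairs
involving `k`, so the numerator changes by `2 Σ_{j ≠ k} ((x_k - x_j)² - (x'_k - x_j)²)`, a sum of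
`K - 1` differences of two numbers in `[0, 1]`.
-/

open Finset

noncomputable def biasedSampleVar (K : ℕ) (x : Fin K → ℝ) : ℝ :=
  (∑ k, (x k - (∑ j, x j) / K) ^ 2) / K

lemma biasedSampleVar_eq_sum_sum_sq_sub_div (K : ℕ) (x : Fin K → ℝ) :
    biasedSampleVar K x = (∑ i, ∑ j, (x i - x j) ^ 2) / (2 * (K : ℝ) ^ 2) := by
  rcases K.eq_zero_or_pos with rfl | hK
  · simp [biasedSampleVar]
  have hK' : (K : ℝ) ≠ 0 := by positivity
  have hpairs : ∑ i, ∑ j, (x i - x j) ^ 2 = 2 * K * ∑ i, x i ^ 2 - 2 * (∑ i, x i) ^ 2 := by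
    simp only [sub_sq, sum_add_distrib, sum_sub_distrib, sum_const, card_univ,
      Fintype.card_fin, nsmul_eq_mul, ← mul_sum, ← sum_mul]
    ring
  have hdev : ∑ k, (x k - (∑ j, x j) / K) ^ 2 = ∑ i, x i ^ 2 - (∑ i, x i) ^ 2 / K := by
    simp only [sub_sq, sum_add_distrib, sum_sub_distrib, sum_const, card_univ,
      Fintype.card_fin, nsmul_eq_mul, ← sum_mul, ← mul_sum]
    field_simp
    ring
  rw [biasedSampleVar, hpairs, hdev]
  field_simp

lemma sum_sum_eq_sum_sum_erase_add_two_nsmul {ι M : Type*} [Fintype ι] [DecidableEq ι]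
    [AddCommMonoid M] (G : ι → ι → M) (hG : ∀ i j, G i j = G j i) (k : ι) (hk : G k k = 0) :
    ∑ i, ∑ j, G i j =
      ∑ i ∈ univ.erase k, ∑ j ∈ univ.erase k, G i j + 2 • ∑ j ∈ univ.erase k, G k j := by
  simp only [← univ.add_sum_erase _ (mem_univ k), hk, zero_add, sum_add_distrib]
  rw [two_nsmul]
  simp only [hG _ k]
  abel

lemma sum_sum_sq_sub_sub_update {ι : Type*} [Fintype ι] [DecidableEq ι] (x : ι → ℝ) (k : ι)
    (a : ℝ) :
    ∑ i, ∑ j, (x i - x j) ^ 2 - ∑ i, ∑ j, (Function.update x k a i - Function.update x k a j) ^ 2 =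
      2 * ∑ j ∈ univ.erase k, ((x k - x j) ^ 2 - (a - x j) ^ 2) := by
  have hsplit (y : ι → ℝ) := sum_sum_eq_sum_sum_erase_add_two_nsmul (fun i j ↦ (y i - y j) ^ 2)
    (fun i j ↦ by ring) k (by simp)
  have hoff : ∀ i ∈ univ.erase k, Function.update x k a i = x i :=
    fun i hi ↦ Function.update_of_ne (ne_of_mem_erase hi) _ _
  have hrest : ∑ i ∈ univ.erase k, ∑ j ∈ univ.erase k,
      (Function.update x k a i - Function.update x k a j) ^ 2 =
        ∑ i ∈ univ.erase k, ∑ j ∈ univ.erase k, (x i - x j) ^ 2 :=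
    sum_congr rfl fun i hi ↦ sum_congr rfl fun j hj ↦ by rw [hoff i hi, hoff j hj]
  have hrow : ∑ j ∈ univ.erase k, (Function.update x k a k - Function.update x k a j) ^ 2 =
      ∑ j ∈ univ.erase k, (a - x j) ^ 2 :=
    sum_congr rfl fun j hj ↦ by rw [hoff j hj, Function.update_self]
  rw [hsplit, hsplit, hrest, hrow, sum_sub_distrib, nsmul_eq_mul, nsmul_eq_mul]
  ring

lemma abs_sub_sq_sub_sub_sq_le_one {a b c : ℝ} (ha : a ∈ Set.Icc (0 : ℝ) 1)
    (hb : b ∈ Set.Icc (0 : ℝ) 1) (hc : c ∈ Set.Icc (0 : ℝ) 1) :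
    |(a - c) ^ 2 - (b - c) ^ 2| ≤ 1 := by
  have hsq {u : ℝ} (hu : u ∈ Set.Icc (0 : ℝ) 1) : (u - c) ^ 2 ≤ 1 :=
    (sq_le_one_iff_abs_le_one _).2 (abs_sub_le_of_nonneg_of_le hu.1 hu.2 hc.1 hc.2)
  exact abs_sub_le_of_nonneg_of_le (sq_nonneg _) (hsq ha) (sq_nonneg _) (hsq hb)

theorem biasedSampleVar_bounded_differences_general
    (K : ℕ)
    (x : Fin K → ℝ) (hx : ∀ k, x k ∈ Set.Icc (0 : ℝ) 1)
    (k : Fin K) (xk' : ℝ) (hxk' : xk' ∈ Set.Icc (0 : ℝ) 1) :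
    |biasedSampleVar K x - biasedSampleVar K (Function.update x k xk')| ≤
        ((K : ℝ) - 1) / (K : ℝ) ^ 2 ∧
      |biasedSampleVar K x - biasedSampleVar K (Function.update x k xk')| ≤
        1 / (K : ℝ) := by
  have hK : (1 : ℝ) ≤ K := by exact_mod_cast k.pos
  have hK0 : (0 : ℝ) < K := by linarith
  have hsum : |∑ j ∈ univ.erase k, ((x k - x j) ^ 2 - (xk' - x j) ^ 2)| ≤ K - 1 :=
    calc _ ≤ ∑ j ∈ univ.erase k, |(x k - x j) ^ 2 - (xk' - x j) ^ 2| := abs_sum_le_sum_abs _ _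
      _ ≤ (univ.erase k).card • (1 : ℝ) :=
        sum_le_card_nsmul _ _ _ fun j _ ↦ abs_sub_sq_sub_sub_sq_le_one (hx k) hxk' (hx j)
      _ = K - 1 := by simp [card_erase_of_mem, Nat.cast_sub k.pos]
  have hmain : |biasedSampleVar K x - biasedSampleVar K (Function.update x k xk')| ≤
      ((K : ℝ) - 1) / (K : ℝ) ^ 2 := by
    rw [biasedSampleVar_eq_sum_sum_sq_sub_div, biasedSampleVar_eq_sum_sum_sq_sub_div,
      div_sub_div_same, sum_sum_sq_sub_sub_update, mul_div_mul_left _ _ two_ne_zero, abs_div,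
      abs_of_pos (pow_pos hK0 2)]
    exact div_le_div_of_nonneg_right hsum (by positivity)
  refine ⟨hmain, hmain.trans ?_⟩
  rw [div_le_div_iff₀ (by positivity) (by positivity)]
  nlinarith

/-- Replacing a single coordinate of a `[0,1]`-valued vector
changes the biased sample variance by at most `(K−1)/K²`, hence by at most `1/K`. -/
theorem biasedSampleVar_bounded_differences
    (K : ℕ) (hK : 1 ≤ K)
    (x : Fin K → ℝ) (hx : ∀ k, x k ∈ Set.Icc (0 : ℝ) 1)
    (k : Fin K) (xk' : ℝ) (hxk' : xk' ∈ Set.Icc (0 : ℝ) 1) :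
    |biasedSampleVar K x - biasedSampleVar K (Function.update x k xk')| ≤
        ((K : ℝ) - 1) / (K : ℝ) ^ 2 ∧
      |biasedSampleVar K x - biasedSampleVar K (Function.update x k xk')| ≤
        1 / (K : ℝ) :=
  biasedSampleVar_bounded_differences_general K x hx k xk' hxk'
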